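/- arXiv:1702.08794 — 2 statements merged into one kernel-verified Lean document; each statement's English description precedes it below -/
import Mathlib

section
/- The probability vector y* with y*_l = (e^{(l+1)θc} − e^{lθc})/(e^{θ(v−(l+1))} − 1) for 0 ≤ l ≤ k−1, y*_k = 1 − Σ_{l=0}^{k−1} y*_l, and y*_j = 0 for j > k, solves the risk-sensitive indifference system: for every 1 ≤ l ≤ k, Σ_{i=0}^{l−1} (e^{θ(v−(i+1))} − 1)·y_i + 1 = e^{θlc}. -/
open Real

/-- Risk-sensitive two-bidder LUBA: the probability vector with
`y*_l = (e^{(l+1)θc} - e^{lθc})/(e^{θ(v-(l+1))} - 1)` for `l < k`,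
`y*_k = 1 - Σ_{l<k} y*_l`, and `y*_j = 0` for `j > k` solves the indifference
system `Σ_{i<l} (e^{θ(v-(i+1))} - 1)·y_i + 1 = e^{θlc}` for all `1 ≤ l ≤ k`. -/
theorem stmt11 (v c θ : ℝ) (k : ℕ) (hc : 0 < c) (hv : v > c + 1) (hθ : θ ≠ 0)
    (hden : ∀ l : ℕ, l ≤ k → exp (θ * (v - (l + 1))) ≠ 1)
    (y : ℕ → ℝ)
    (hy : ∀ l : ℕ, y l =
      if l < k then
        (exp ((l + 1) * θ * c) - exp (l * θ * c)) / (exp (θ * (v - (l + 1))) - 1)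
      else if l = k then
        1 - ∑ i ∈ Finset.range k,
          (exp ((i + 1) * θ * c) - exp (i * θ * c)) / (exp (θ * (v - (i + 1))) - 1)
      else 0) :
    ∀ l : ℕ, 1 ≤ l → l ≤ k →
      (∑ i ∈ Finset.range l, (exp (θ * (v - (i + 1))) - 1) * y i) + 1 =
        exp (θ * l * c) := by
  intro l hl1 hlk
  have hsum : ∑ i ∈ Finset.range l, (exp (θ * (v - (i + 1))) - 1) * y i
      = ∑ i ∈ Finset.range l, (exp ((i + 1 : ℕ) * θ * c) - exp ((i : ℕ) * θ * c)) := by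
    apply Finset.sum_congr rfl
    intro i hi
    have hik : i < k := lt_of_lt_of_le (Finset.mem_range.mp hi) hlk
    have hne : exp (θ * (v - (i + 1))) - 1 ≠ 0 :=
      sub_ne_zero.mpr (hden i (le_of_lt hik))
    rw [hy i, if_pos hik]
    push_cast
    field_simp
  rw [hsum, Finset.sum_range_sub (fun i : ℕ => exp (i * θ * c))]
  push_cast
  ring_nf
  rw [Real.exp_zero]
  ring
end

section
/- For a risk parameter θ, the equilibrium non-participation probability p(θ) = (1 − e^{θ})/(1 − e^{vθ}) (with p(0) := 1/v by continuity) is monotone decreasing in θ: a risk-seeking bidder (θ > 0) participates with higher probability than a risk-neutral one (θ = 0), who in turn participates with higher probability than a risk-averse one (θ < 0). Equivalently, p(θ) < 1/v for θ > 0 and p(θ) > 1/v for θ < 0. -/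
/-!
Substituting `y = e^{vθ}` gives `p(θ) = (y^{1/v} - 1)/(y - 1)`, the slope of the strictly concave
function `y ↦ y^{1/v}` between `1` and `y`, while `p(0) = 1/v` is its derivative at `1`.
Slopes of a strictly concave function from a fixed point decrease in the other endpoint, and
`θ ↦ e^{vθ}` is increasing, so `p` is strictly decreasing; the two bounds are `p θ < p 0` and
`p 0 < p θ`.
-/

open Real Set

theorem StrictConcaveOn.strictAntiOn_dslope {S : Set ℝ} {f : ℝ → ℝ} {a : ℝ}
    (hfc : StrictConcaveOn ℝ S f) (ha : a ∈ S) (hfd : DifferentiableAt ℝ f a) :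
    StrictAntiOn (dslope f a) S := by
  intro x hx y hy hxy
  rcases eq_or_ne x a with rfl | hxa
  · rw [dslope_same, dslope_of_ne f hxy.ne']
    exact hfc.slope_lt_deriv hx hy hxy hfd
  rcases eq_or_ne y a with rfl | hya
  · rw [dslope_same, dslope_of_ne f hxa, slope_comm]
    exact hfc.deriv_lt_slope hx hy hxy hfd
  rw [dslope_of_ne f hxa, dslope_of_ne f hya, slope_def_field, slope_def_field]
  exact hfc.secant_strict_mono ha hx hy hxa hya hxy

theorem dslope_rpow_one_div_exp_mul {v : ℝ} (hv : v ≠ 0) (θ : ℝ) :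
    dslope (fun y : ℝ => y ^ (1 / v)) 1 (exp (v * θ)) =
      if θ = 0 then 1 / v else (1 - exp θ) / (1 - exp (v * θ)) := by
  split_ifs with hθ
  · simp [hθ, dslope_same]
  have hne : exp (v * θ) ≠ 1 := by
    simpa [Real.exp_eq_one_iff] using mul_ne_zero hv hθ
  rw [dslope_of_ne _ hne, slope_def_field, ← Real.exp_mul, mul_one_div,
    mul_div_cancel_left₀ θ hv, one_rpow, ← neg_div_neg_eq, neg_sub, neg_sub]

/-- The equilibrium non-participation probability
`p(θ) = (1-e^θ)/(1-e^{vθ})` (with `p(0) = 1/v`) is strictly decreasing in the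
risk parameter `θ`; in particular `p(θ) < 1/v` for `θ > 0` and `p(θ) > 1/v`
for `θ < 0`. -/
theorem stmt15 (v : ℝ) (hv : 1 < v) (p : ℝ → ℝ)
    (hp : ∀ θ : ℝ, p θ = if θ = 0 then 1 / v else (1 - exp θ) / (1 - exp (v * θ))) :
    StrictAnti p ∧
    (∀ θ : ℝ, 0 < θ → p θ < 1 / v) ∧
    (∀ θ : ℝ, θ < 0 → 1 / v < p θ) := by
  have hv₀ : 0 < v := zero_lt_one.trans hv
  have hp_dslope : ∀ θ, p θ = dslope (fun y : ℝ => y ^ (1 / v)) 1 (exp (v * θ)) := fun θ =>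
    (hp θ).trans (dslope_rpow_one_div_exp_mul hv₀.ne' θ).symm
  have hconcave : StrictConcaveOn ℝ (Ici 0) fun y : ℝ => y ^ (1 / v) :=
    Real.strictConcaveOn_rpow (by positivity) ((div_lt_one hv₀).2 hv)
  have hanti : StrictAnti p := fun a b hab => by
    rw [hp_dslope, hp_dslope]
    exact hconcave.strictAntiOn_dslope (mem_Ici.2 zero_le_one)
      (Real.differentiableAt_rpow_const_of_ne _ one_ne_zero) (exp_pos _).le (exp_pos _).le
      (exp_lt_exp.2 (mul_lt_mul_of_pos_left hab hv₀))
  have hp₀ : p 0 = 1 / v := by simp [hp]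
  exact ⟨hanti, fun θ hθ => hp₀ ▸ hanti hθ, fun θ hθ => hp₀ ▸ hanti hθ⟩
end
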